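/- Let (φ_α)_{α>0} be a family of functions φ_α : ℝ → ℝ, each monotonically increasing, nonexpansive (1-Lipschitz) and satisfying φ_α(0) = 0. Then the following are equivalent: (1) for every x ∈ ℝ, φ_α(x) → x as α → 0; (2) for every x ∈ ℝ, sup{ |y − x| : y ∈ ℝ, φ_α(y) = x } → 0 as α → 0, where the supremum over the empty set is taken to be +∞ (so (2) in particular requires the preimage φ_α⁻¹({x}) to be nonempty for all sufficiently small α). -/

import Mathlib

open scoped ENNReal Topology
open Filter

noncomputable section

/-!
A monotone continuous `f` with `f (x - r) < x < f (x + r)` takes the value `x` (intermediate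
value theorem), and only at points of `(x - r, x + r)` (monotonicity); so pointwise convergence
`φ_α → id` at `x ± r` pins the whole fibre `φ_α⁻¹{x}` near `x`. Conversely, for a nonexpansive
`f` and any `y` with `f y = x` we have `|f x - x| = |f x - f y| ≤ |x - y|`, so the spread of the
fibre around `x` bounds `|f x - x|`.
-/

open Classical in
/-- `sup {|y - x| : f y = x}` in `[0, ∞]`, with the supremum over the empty fibre taken to be `∞`
rather than Lean's `⨆ ∅ = 0`. -/
def preimageSpread (f : ℝ → ℝ) (x : ℝ) : ℝ≥0∞ :=
  if ∃ y, f y = x then ⨆ y : {y : ℝ // f y = x}, edist (y : ℝ) x else ⊤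

theorem LipschitzWith.edist_apply_le_preimageSpread {f : ℝ → ℝ} (hf : LipschitzWith 1 f)
    (x : ℝ) : edist (f x) x ≤ preimageSpread f x := by
  rw [preimageSpread]
  split_ifs with hx
  · obtain ⟨y, hy⟩ := hx
    calc edist (f x) x = edist (f x) (f y) := by rw [hy]
      _ ≤ edist x y := by simpa using hf.edist_le_mul x y
      _ = edist y x := edist_comm x y
      _ ≤ ⨆ y : {y : ℝ // f y = x}, edist (y : ℝ) x := le_iSup_of_le ⟨y, hy⟩ le_rfl
  · exact le_top

theorem Monotone.preimageSpread_le {f : ℝ → ℝ} (hmono : Monotone f) (hcont : Continuous f)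
    {x r : ℝ} (hlo : f (x - r) < x) (hhi : x < f (x + r)) :
    preimageSpread f x ≤ ENNReal.ofReal r := by
  obtain ⟨y₀, hy₀⟩ := intermediate_value_univ (x - r) (x + r) hcont ⟨hlo.le, hhi.le⟩
  rw [preimageSpread, if_pos ⟨y₀, hy₀⟩]
  refine iSup_le fun ⟨y, hy⟩ => ?_
  have hy_lo : x - r < y := hmono.reflect_lt (hy ▸ hlo)
  have hy_hi : y < x + r := hmono.reflect_lt (hy ▸ hhi)
  rw [edist_dist, Real.dist_eq]
  exact ENNReal.ofReal_le_ofReal (abs_le.mpr ⟨by linarith, by linarith⟩)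

section Family

variable {ι : Type*} {l : Filter ι} {φ : ι → ℝ → ℝ}

theorem tendsto_preimageSpread_zero (hmono : ∀ᶠ i in l, Monotone (φ i))
    (hcont : ∀ᶠ i in l, Continuous (φ i)) (h : ∀ y, Tendsto (φ · y) l (𝓝 y)) (x : ℝ) :
    Tendsto (fun i => preimageSpread (φ i) x) l (𝓝 0) := by
  refine ENNReal.tendsto_nhds_zero.mpr fun ε hε => ?_
  obtain ⟨r, -, hr_pos, hr_le⟩ := ENNReal.lt_iff_exists_real_btwn.mp hε
  have hr : 0 < r := ENNReal.ofReal_pos.mp hr_pos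
  have hlo := (h (x - r)).eventually_lt_const (show x - r < x by linarith)
  have hhi := (h (x + r)).eventually_const_lt (show x < x + r by linarith)
  filter_upwards [hmono, hcont, hlo, hhi] with i hmono_i hcont_i hlo_i hhi_i
  exact (hmono_i.preimageSpread_le hcont_i hlo_i hhi_i).trans hr_le.le

theorem tendsto_of_tendsto_preimageSpread (hlip : ∀ᶠ i in l, LipschitzWith 1 (φ i)) {x : ℝ}
    (h : Tendsto (fun i => preimageSpread (φ i) x) l (𝓝 0)) : Tendsto (φ · x) l (𝓝 x) := by
  rw [tendsto_iff_edist_tendsto_0]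
  refine tendsto_of_tendsto_of_tendsto_of_le_of_le' tendsto_const_nhds h
    (Eventually.of_forall fun _ => zero_le) ?_
  filter_upwards [hlip] with i hlip_i
  exact hlip_i.edist_apply_le_preimageSpread x

end Family

open Classical in
theorem statement0 (φ : ℝ → ℝ → ℝ)
    (hmono : ∀ α : ℝ, 0 < α → Monotone (φ α))
    (hnonexp : ∀ α : ℝ, 0 < α → ∀ x y : ℝ, |φ α x - φ α y| ≤ |x - y|) :
    (∀ x : ℝ, Tendsto (fun α => φ α x) (nhdsWithin 0 (Set.Ioi 0)) (nhds x)) ↔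
    (∀ x : ℝ, Tendsto
      (fun α => if ∃ y, φ α y = x then
          ⨆ y : {y : ℝ // φ α y = x}, (‖(y : ℝ) - x‖₊ : ℝ≥0∞)
        else ⊤)
      (nhdsWithin 0 (Set.Ioi 0)) (nhds 0)) := by
  have hlip : ∀ᶠ α in 𝓝[>] 0, LipschitzWith 1 (φ α) :=
    eventually_nhdsWithin_of_forall fun α hα =>
      LipschitzWith.of_dist_le_mul fun a b => by simpa [Real.dist_eq] using hnonexp α hα a b
  exact ⟨tendsto_preimageSpread_zero (eventually_nhdsWithin_of_forall hmono)
      (hlip.mono fun _ h => h.continuous),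
    fun h _ => tendsto_of_tendsto_preimageSpread hlip (h _)⟩
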